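/- arXiv:2005.12556 — 2 statements merged into one kernel-verified Lean document; each statement's English description precedes it below -/
import Mathlib

section
/- Let θ, s, G > 0, let X̃ ~ Exp(θ) and T̃ ~ Uniform[0,G] be independent. Then E[ X̃ · 1_{T̃ ≤ X̃ ≤ T̃ + s} ] = (−s/(Gθ) − 2/(Gθ²))·exp(−θs) + (−1/θ − 2/(Gθ²))·exp(−θG) + ((G+s)/(Gθ) + 2/(Gθ²))·exp(−θ(G+s)) + 2/(Gθ²). -/
/-!
By independence the joint law of `(X, T)` is `Exp(θ) ⊗ Unif[0, G]`, so by Fubini the expectation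
is `G⁻¹ ∫₀^G ∫_t^{t+s} x θ e^{-θx} dx dt`. The inner integral is `F t - F (t + s)` with
`F t = (t + θ⁻¹) e^{-θt}`, and `F` has the antiderivative `-(t/θ + 2/θ²) e^{-θt}`.
-/

open MeasureTheory ProbabilityTheory Real Set Filter

/-- The uniform probability measure on the interval `[0, G]`. -/
noncomputable def uniformMeasure (G : ℝ) : Measure ℝ :=
  (ENNReal.ofReal G)⁻¹ • (volume.restrict (Set.Icc 0 G))

lemma isProbabilityMeasure_uniformMeasure {G : ℝ} (hG : 0 < G) :
    IsProbabilityMeasure (uniformMeasure G) := by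
  constructor
  rw [uniformMeasure, Measure.smul_apply, Measure.restrict_apply MeasurableSet.univ,
    univ_inter, Real.volume_Icc, sub_zero, smul_eq_mul]
  exact ENNReal.inv_mul_cancel (by simpa using hG) ENNReal.ofReal_ne_top

lemma ae_uniformMeasure_mem_Icc (G : ℝ) : ∀ᵐ t ∂uniformMeasure G, t ∈ Icc 0 G :=
  Measure.ae_smul_measure (ae_restrict_mem measurableSet_Icc) _

lemma integral_uniformMeasure {G : ℝ} (hG : 0 ≤ G) (g : ℝ → ℝ) :
    ∫ t, g t ∂uniformMeasure G = G⁻¹ * ∫ t in 0..G, g t := by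
  rw [uniformMeasure, integral_smul_measure, ENNReal.toReal_inv, ENNReal.toReal_ofReal hG,
    smul_eq_mul, integral_Icc_eq_integral_Ioc, intervalIntegral.integral_of_le hG]

lemma setIntegral_Icc_expMeasure {θ a b : ℝ} (hθ : 0 ≤ θ) (ha : 0 ≤ a) (hab : a ≤ b)
    (g : ℝ → ℝ) :
    ∫ x in Icc a b, g x ∂expMeasure θ = ∫ x in a..b, θ * exp (-(θ * x)) * g x := by
  rw [expMeasure, gammaMeasure,
    setIntegral_withDensity_eq_setIntegral_toReal_smul' (f := gammaPDF 1 θ) _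
      (measurable_gammaPDFReal 1 θ).ennreal_ofReal (ae_of_all _ fun _ => ENNReal.ofReal_lt_top),
    integral_Icc_eq_integral_Ioc, intervalIntegral.integral_of_le hab]
  refine setIntegral_congr_fun measurableSet_Ioc fun x hx => ?_
  have hx0 : 0 ≤ x := ha.trans hx.1.le
  simp [gammaPDF, gammaPDFReal, hx0, hθ, exp_nonneg]

lemma integral_mul_exp_neg_mul_mul_id {θ : ℝ} (hθ : θ ≠ 0) (a b : ℝ) :
    ∫ x in a..b, θ * exp (-(θ * x)) * x
      = (a + θ⁻¹) * exp (-(θ * a)) - (b + θ⁻¹) * exp (-(θ * b)) := by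
  have hderiv (x : ℝ) : HasDerivAt (fun x => -((x + θ⁻¹) * exp (-(θ * x))))
      (θ * exp (-(θ * x)) * x) x := by
    have := (((hasDerivAt_id' x).add_const θ⁻¹).mul
      (((hasDerivAt_id' x).const_mul θ).neg.exp)).neg
    exact this.congr_deriv (by simp only [Pi.neg_apply]; field_simp; ring)
  rw [intervalIntegral.integral_eq_sub_of_hasDerivAt (fun x _ => hderiv x)
    (Continuous.intervalIntegrable (by fun_prop) a b)]
  ring

lemma integral_add_inv_mul_exp_neg_mul {θ : ℝ} (hθ : θ ≠ 0) (a b : ℝ) :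
    ∫ x in a..b, (x + θ⁻¹) * exp (-(θ * x))
      = (a / θ + 2 / θ ^ 2) * exp (-(θ * a)) - (b / θ + 2 / θ ^ 2) * exp (-(θ * b)) := by
  have hderiv (x : ℝ) : HasDerivAt (fun x => -((x / θ + 2 / θ ^ 2) * exp (-(θ * x))))
      ((x + θ⁻¹) * exp (-(θ * x))) x := by
    have := ((((hasDerivAt_id' x).div_const θ).add_const (2 / θ ^ 2)).mul
      (((hasDerivAt_id' x).const_mul θ).neg.exp)).neg
    exact this.congr_deriv (by simp only [Pi.neg_apply]; field_simp; ring)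
  rw [intervalIntegral.integral_eq_sub_of_hasDerivAt (fun x _ => hderiv x)
    (Continuous.intervalIntegrable (by fun_prop) a b)]
  ring

lemma integral_comp_prodMk_of_indepFun {Ω α β E : Type*} [MeasurableSpace Ω]
    [MeasurableSpace α] [MeasurableSpace β] [NormedAddCommGroup E] [NormedSpace ℝ E]
    {P : Measure Ω} [IsFiniteMeasure P] {X : Ω → α} {T : Ω → β} (hX : Measurable X)
    (hT : Measurable T) (hindep : IndepFun X T P) {f : α × β → E}
    (hf : Integrable f ((P.map X).prod (P.map T))) :
    ∫ ω, f (X ω, T ω) ∂P = ∫ t, ∫ x, f (x, t) ∂P.map X ∂P.map T := by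
  have hjoint : P.map (fun ω => (X ω, T ω)) = (P.map X).prod (P.map T) :=
    (indepFun_iff_map_prod_eq_prod_map_map hX.aemeasurable hT.aemeasurable).1 hindep
  rw [← integral_prod_symm f hf, ← hjoint,
    integral_map (hX.prodMk hT).aemeasurable (hjoint ▸ hf.aestronglyMeasurable)]

lemma integrable_indicator_fst_mem_Icc {μ ν : Measure ℝ} [IsFiniteMeasure μ]
    [IsFiniteMeasure ν] {a b : ℝ} (s : ℝ) (hν : ∀ᵐ t ∂ν, t ∈ Icc a b) :
    Integrable ({p : ℝ × ℝ | p.1 ∈ Icc p.2 (p.2 + s)}.indicator Prod.fst) (μ.prod ν) := by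
  have hA : MeasurableSet {p : ℝ × ℝ | p.1 ∈ Icc p.2 (p.2 + s)} :=
    (measurableSet_le measurable_snd measurable_fst).inter
      (measurableSet_le measurable_fst (measurable_snd.add_const s))
  refine (integrable_const (max |a| |b + s|)).mono'
    (measurable_fst.indicator hA).aestronglyMeasurable ?_
  filter_upwards [Measure.quasiMeasurePreserving_snd.ae hν] with p hp
  by_cases h : p ∈ {p : ℝ × ℝ | p.1 ∈ Icc p.2 (p.2 + s)}
  · rw [indicator_of_mem h, Real.norm_eq_abs]
    exact abs_le_max_abs_abs (hp.1.trans h.1) (h.2.trans (by linarith [hp.2]))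
  · rw [indicator_of_notMem h, norm_zero]
    positivity

/-- `E[X̃ · 1_{T̃ ≤ X̃ ≤ T̃ + s}]` for independent `X̃ ~ Exp(θ)` and `T̃ ~ Uniform[0,G]`. -/
theorem truncated_first_moment
    {Ω : Type*} [MeasurableSpace Ω] (P : Measure Ω) [IsProbabilityMeasure P]
    (θ s G : ℝ) (hθ : 0 < θ) (hs : 0 < s) (hG : 0 < G)
    (X T : Ω → ℝ) (hX : Measurable X) (hT : Measurable T)
    (hXlaw : P.map X = expMeasure θ)
    (hTlaw : P.map T = uniformMeasure G)
    (hindep : IndepFun X T P) :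
    ∫ ω in {ω | T ω ≤ X ω ∧ X ω ≤ T ω + s}, X ω ∂P
      = (-(s / (G * θ)) - 2 / (G * θ ^ 2)) * exp (-(θ * s))
        + (-(1 / θ) - 2 / (G * θ ^ 2)) * exp (-(θ * G))
        + ((G + s) / (G * θ) + 2 / (G * θ ^ 2)) * exp (-(θ * (G + s)))
        + 2 / (G * θ ^ 2) := by
  have := isProbabilityMeasure_expMeasure hθ
  have := isProbabilityMeasure_uniformMeasure hG
  set A : Set (ℝ × ℝ) := {p | p.1 ∈ Icc p.2 (p.2 + s)}
  have hS : MeasurableSet {ω | T ω ≤ X ω ∧ X ω ≤ T ω + s} :=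
    (measurableSet_le hT hX).inter (measurableSet_le hX (hT.add_const s))
  have hint : Integrable (A.indicator Prod.fst) ((P.map X).prod (P.map T)) := by
    rw [hXlaw, hTlaw]
    exact integrable_indicator_fst_mem_Icc s (ae_uniformMeasure_mem_Icc G)
  have hinner (t : ℝ) (ht : t ∈ uIcc 0 G) : ∫ x, A.indicator Prod.fst (x, t) ∂expMeasure θ
      = (t + θ⁻¹) * exp (-(θ * t)) - (t + s + θ⁻¹) * exp (-(θ * (t + s))) := by
    rw [uIcc_of_le hG.le] at ht
    calc ∫ x, A.indicator Prod.fst (x, t) ∂expMeasure θ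
        = ∫ x in Icc t (t + s), x ∂expMeasure θ := by
          rw [← integral_indicator measurableSet_Icc]
          rfl
      _ = _ := by
          rw [setIntegral_Icc_expMeasure hθ.le ht.1 (by linarith),
            integral_mul_exp_neg_mul_mul_id hθ.ne']
  calc ∫ ω in {ω | T ω ≤ X ω ∧ X ω ≤ T ω + s}, X ω ∂P
      = ∫ ω, A.indicator Prod.fst (X ω, T ω) ∂P := (integral_indicator hS).symm
    _ = ∫ t, ∫ x, A.indicator Prod.fst (x, t) ∂expMeasure θ ∂uniformMeasure G := by
        rw [integral_comp_prodMk_of_indepFun hX hT hindep hint, hXlaw, hTlaw]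
    _ = G⁻¹ * ∫ t in 0..G,
          ((t + θ⁻¹) * exp (-(θ * t)) - (t + s + θ⁻¹) * exp (-(θ * (t + s)))) := by
        rw [integral_uniformMeasure hG.le, intervalIntegral.integral_congr hinner]
    _ = _ := by
        rw [intervalIntegral.integral_sub (Continuous.intervalIntegrable (by fun_prop) _ _)
            (Continuous.intervalIntegrable (by fun_prop) _ _),
          intervalIntegral.integral_comp_add_right (fun t => (t + θ⁻¹) * exp (-(θ * t))),
          integral_add_inv_mul_exp_neg_mul hθ.ne', integral_add_inv_mul_exp_neg_mul hθ.ne',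
          zero_add, mul_zero, neg_zero, exp_zero]
        field_simp
        ring
end

section
/- For all real θ > 0, s > 0 and G > 0, 2/θ² − s²·exp(−θs)/(1 − exp(−θs))² − G²·exp(−Gθ)/(1 − exp(−Gθ))² > 0. -/
/-!
Writing `x = θs` (resp. `x = Gθ`), each subtracted term is `x² e^{-x}/(1 - e^{-x})² / θ²`, and
`e^{-x}/(1 - e^{-x})² = 1/(2 sinh (x/2))²`. Since `x/2 < sinh (x/2)` for `x > 0`, each term is
strictly below `1/θ²`.
-/

open Real

theorem exp_neg_div_one_sub_exp_neg_sq (x : ℝ) :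
    exp (-x) / (1 - exp (-x)) ^ 2 = 1 / (2 * sinh (x / 2)) ^ 2 := by
  have hx : exp (-x) = exp (-(x / 2)) ^ 2 := by rw [← exp_nat_mul]; ring_nf
  have hsinh : 2 * sinh (x / 2) * exp (-(x / 2)) = 1 - exp (-x) := by
    rw [sinh_eq, hx, mul_div_cancel₀ _ two_ne_zero, sub_mul, ← exp_add]
    ring_nf
    rw [exp_zero]
  rw [← hsinh, mul_pow, hx, div_mul_cancel_right₀ (pow_ne_zero 2 (exp_pos _).ne'), one_div]

theorem sq_mul_exp_neg_div_one_sub_exp_neg_sq_lt_one {x : ℝ} (hx : 0 < x) :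
    x ^ 2 * exp (-x) / (1 - exp (-x)) ^ 2 < 1 := by
  have hsinh : x < 2 * sinh (x / 2) := by
    linarith [self_lt_sinh_iff.mpr (half_pos hx)]
  rw [mul_div_assoc, exp_neg_div_one_sub_exp_neg_sq, mul_one_div, div_lt_one (by positivity)]
  gcongr

theorem sq_mul_exp_neg_mul_div_lt_inv_sq {θ a : ℝ} (hθ : 0 < θ) (ha : 0 < a) :
    a ^ 2 * exp (-(θ * a)) / (1 - exp (-(θ * a))) ^ 2 < 1 / θ ^ 2 := by
  have key := sq_mul_exp_neg_div_one_sub_exp_neg_sq_lt_one (mul_pos hθ ha)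
  rw [lt_div_iff₀ (by positivity)]
  calc a ^ 2 * exp (-(θ * a)) / (1 - exp (-(θ * a))) ^ 2 * θ ^ 2
      = (θ * a) ^ 2 * exp (-(θ * a)) / (1 - exp (-(θ * a))) ^ 2 := by ring
    _ < 1 := key

/-- For all `θ, s, G > 0`, the derivative of the per-observation score is positive:
`2/θ² − s² e^{−θs}/(1 − e^{−θs})² − G² e^{−Gθ}/(1 − e^{−Gθ})² > 0`. -/
theorem score_derivative_pos (θ s G : ℝ) (hθ : 0 < θ) (hs : 0 < s) (hG : 0 < G) :
    0 < 2 / θ ^ 2 - s ^ 2 * exp (-(θ * s)) / (1 - exp (-(θ * s))) ^ 2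
        - G ^ 2 * exp (-(G * θ)) / (1 - exp (-(G * θ))) ^ 2 := by
  have hs_term := sq_mul_exp_neg_mul_div_lt_inv_sq hθ hs
  have hG_term := sq_mul_exp_neg_mul_div_lt_inv_sq hθ hG
  rw [mul_comm θ G] at hG_term
  linarith [show (2 : ℝ) / θ ^ 2 = 1 / θ ^ 2 + 1 / θ ^ 2 by ring]
end
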